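/- arXiv:2110.01119 — 4 statements merged into one kernel-verified Lean document; each statement's English description precedes it below -/
import Mathlib

section
/- Let x_1, …, x_n be independent real-valued random variables on a probability space with E[x_i] = 0, E[x_i²] = σ_i², and |x_i| ≤ M almost surely for all i, where M > 0. Set nσ² = Σ_{i=1}^n σ_i² and let h(x) = (1+x)·ln(1+x) − x. Then for every α with 0 ≤ α < nM, P(Σ_{i=1}^n x_i ≥ α) ≤ exp( −(nσ²/M²)·h(αM/(nσ²)) ). -/
open MeasureTheory ProbabilityTheory

lemma remainder_integral {w : ℝ} (hw : w ≠ 0) :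
    ∫ s in (0:ℝ)..1, (1-s) * Real.exp (s*w) = (Real.exp w - 1 - w)/w^2 := by
  have h : ∀ s ∈ Set.uIcc (0:ℝ) 1, HasDerivAt
      (fun s => Real.exp (s*w) * ((1-s)/w + 1/w^2)) ((1-s) * Real.exp (s*w)) s := by
    intro s _
    have h1 : HasDerivAt (fun s : ℝ => Real.exp (s*w)) (Real.exp (s*w) * w) s := by
      simpa using ((hasDerivAt_id' s).mul_const w).exp
    have h2 : HasDerivAt (fun s : ℝ => (1-s)/w + 1/w^2) (-(1/w)) s := by
      have : HasDerivAt (fun s : ℝ => (1-s)/w + 1/w^2) ((0 - 1)/w + 0) s := by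
        exact (((hasDerivAt_const s (1:ℝ)).sub (hasDerivAt_id s)).div_const w).add
          (hasDerivAt_const s _)
      convert this using 1
      ring
    have := h1.mul h2
    convert this using 1
    · rfl
    · rfl
    · rfl
    · field_simp
      ring
  rw [intervalIntegral.integral_eq_sub_of_hasDerivAt h]
  · field_simp
    rw [mul_zero, Real.exp_zero]; ring
  · apply Continuous.intervalIntegrable
    continuity

lemma exp_taylor_bound {u v : ℝ} (hv : 0 < v) (huv : u ≤ v) :
    Real.exp u - 1 - u ≤ u^2 / v^2 * (Real.exp v - 1 - v) := by
  rcases eq_or_ne u 0 with rfl | hu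
  · simp
  · have hmono : ∫ s in (0:ℝ)..1, (1-s) * Real.exp (s*u)
        ≤ ∫ s in (0:ℝ)..1, (1-s) * Real.exp (s*v) := by
      apply intervalIntegral.integral_mono_on zero_le_one
      · apply Continuous.intervalIntegrable; continuity
      · apply Continuous.intervalIntegrable; continuity
      · intro s hs
        have h1 : 0 ≤ 1 - s := by linarith [hs.2]
        have h2 : Real.exp (s*u) ≤ Real.exp (s*v) :=
          Real.exp_le_exp.2 (mul_le_mul_of_nonneg_left huv hs.1)
        exact mul_le_mul_of_nonneg_left h2 h1
    rw [remainder_integral hu, remainder_integral hv.ne'] at hmono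
    have hu2 : (0:ℝ) < u^2 := by positivity
    have := mul_le_mul_of_nonneg_left hmono hu2.le
    calc Real.exp u - 1 - u = u^2 * ((Real.exp u - 1 - u)/u^2) := by field_simp
    _ ≤ u^2 * ((Real.exp v - 1 - v)/v^2) := this
    _ = u^2/v^2 * (Real.exp v - 1 - v) := by ring

lemma mgf_single_bound {Ω : Type*} [MeasureSpace Ω] [IsProbabilityMeasure (ℙ : Measure Ω)]
    (X : Ω → ℝ) (hX : Measurable X) (hmean : ∫ ω, X ω = 0)
    (M : ℝ) (hM : 0 < M) (hb : ∀ᵐ ω ∂ℙ, |X ω| ≤ M) (t : ℝ) (ht : 0 ≤ t) :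
    mgf X ℙ t ≤ Real.exp ((∫ ω, (X ω)^2) / M^2 * (Real.exp (t*M) - 1 - t*M)) := by
  rcases ht.eq_or_lt with rfl | htpos
  · simp [mgf_zero]
  set g := Real.exp (t*M) - 1 - t*M with hgdef
  set S := ∫ ω, (X ω)^2 with hSdef
  have hint1 : Integrable X ℙ :=
    Integrable.mono' (integrable_const M) hX.aestronglyMeasurable
      (by simpa [Real.norm_eq_abs] using hb)
  have hint2 : Integrable (fun ω => (X ω)^2) ℙ := by
    refine Integrable.mono' (integrable_const (M^2)) ((hX.pow_const 2).aestronglyMeasurable) ?_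
    filter_upwards [hb] with ω h
    rw [Real.norm_eq_abs, abs_pow]
    exact pow_le_pow_left₀ (abs_nonneg _) h 2
  have hint3 : Integrable (fun ω => Real.exp (t * X ω)) ℙ := by
    refine Integrable.mono' (integrable_const (Real.exp (t*M)))
      ((hX.const_mul t).exp.aestronglyMeasurable) ?_
    filter_upwards [hb] with ω h
    rw [Real.norm_eq_abs, abs_of_pos (Real.exp_pos _)]
    exact Real.exp_le_exp.2 (mul_le_mul_of_nonneg_left ((le_abs_self _).trans h) ht)
  have hpt : ∀ᵐ ω ∂ℙ, Real.exp (t * X ω) ≤ 1 + t * X ω + (X ω)^2 * (g / M^2) := by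
    filter_upwards [hb] with ω h
    have hv : 0 < t * M := mul_pos htpos hM
    have huv : t * X ω ≤ t * M :=
      mul_le_mul_of_nonneg_left ((le_abs_self _).trans h) ht
    have := exp_taylor_bound hv huv
    have hq : (t * X ω)^2 / (t * M)^2 = (X ω)^2 / M^2 := by
      rw [mul_pow, mul_pow, mul_div_mul_left _ _ (pow_ne_zero 2 htpos.ne')]
    rw [hq] at this
    calc Real.exp (t * X ω)
        ≤ 1 + t * X ω + (X ω)^2 / M^2 * (Real.exp (t*M) - 1 - t*M) := by linarith
    _ = 1 + t * X ω + (X ω)^2 * (g / M^2) := by rw [hgdef]; ring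
  have i0 : Integrable (fun _ : Ω => (1:ℝ)) ℙ := integrable_const 1
  have i1 : Integrable (fun ω => t * X ω) ℙ := hint1.const_mul t
  have i2 : Integrable (fun ω => (X ω)^2 * (g / M^2)) ℙ := hint2.mul_const _
  have i01 : Integrable (fun ω => 1 + t * X ω) ℙ := by exact i0.add i1
  have hintR : Integrable (fun ω => 1 + t * X ω + (X ω)^2 * (g / M^2)) ℙ := by
    exact i01.add i2
  have key : mgf X ℙ t ≤ ∫ ω, (1 + t * X ω + (X ω)^2 * (g / M^2)) :=
    integral_mono_ae hint3 hintR hpt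
  have hcalc : ∫ ω, (1 + t * X ω + (X ω)^2 * (g / M^2)) = 1 + S * (g / M^2) := by
    rw [integral_add i01 i2, integral_add i0 i1,
      integral_const, integral_const_mul, integral_mul_const, hmean]
    simp
    exact Or.inl rfl
  rw [hcalc] at key
  refine key.trans ?_
  have := Real.add_one_le_exp (S * (g / M^2))
  calc 1 + S * (g / M^2) = S * (g / M^2) + 1 := by ring
  _ ≤ Real.exp (S * (g / M^2)) := Real.add_one_le_exp _
  _ = Real.exp (S / M^2 * g) := by ring_nf

/-- **Bennett's inequality** (Theorem 1 of the paper): for independent, mean-zero,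
almost-surely bounded random variables `x₁, …, xₙ`, with `nσ² = ∑ σᵢ²` and
`h(x) = (1+x)·ln(1+x) − x`, for every `0 ≤ α < n·M`,
`P(∑ xᵢ ≥ α) ≤ exp(−(nσ²/M²)·h(αM/(nσ²)))`. -/
theorem bennett_inequality
    {Ω : Type*} [MeasureSpace Ω] [IsProbabilityMeasure (ℙ : Measure Ω)]
    (n : ℕ) (X : Fin n → Ω → ℝ) (σ : Fin n → ℝ) (M : ℝ) (hM : 0 < M)
    (hmeas : ∀ i, Measurable (X i))
    (hindep : iIndepFun X ℙ)
    (hmean : ∀ i, ∫ ω, X i ω = 0)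
    (hvar : ∀ i, ∫ ω, (X i ω) ^ 2 = (σ i) ^ 2)
    (hbdd : ∀ i, ∀ᵐ ω ∂ℙ, |X i ω| ≤ M)
    (nσ2 : ℝ) (hnσ2 : nσ2 = ∑ i, (σ i) ^ 2)
    (α : ℝ) (hα0 : 0 ≤ α) (hαn : α < n * M) :
    (ℙ {ω | α ≤ ∑ i, X i ω}).toReal ≤
      Real.exp (-(nσ2 / M ^ 2) *
        ((1 + α * M / nσ2) * Real.log (1 + α * M / nσ2) - α * M / nσ2)) := by
  
  have hσnn : 0 ≤ nσ2 := hnσ2 ▸ Finset.sum_nonneg fun i _ => sq_nonneg _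
  have hP1 : (ℙ {ω | α ≤ ∑ i, X i ω}).toReal ≤ 1 := by
    simpa using ENNReal.toReal_mono ENNReal.one_ne_top prob_le_one
  by_cases htriv : α = 0 ∨ nσ2 = 0
  · have hrhs : -(nσ2 / M ^ 2) *
        ((1 + α * M / nσ2) * Real.log (1 + α * M / nσ2) - α * M / nσ2) = 0 := by
      rcases htriv with h | h <;> simp [h]
    rw [hrhs, Real.exp_zero]
    exact hP1
  push_neg at htriv
  have hαpos : 0 < α := lt_of_le_of_ne hα0 (Ne.symm htriv.1)
  have hspos : 0 < nσ2 := lt_of_le_of_ne hσnn (Ne.symm htriv.2)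
  set u₀ := α * M / nσ2 with hu0def
  have hu0 : 0 < u₀ := by positivity
  set t := Real.log (1 + u₀) / M with htdef
  have ht : 0 < t := div_pos (Real.log_pos (by linarith)) hM
  have htM : t * M = Real.log (1 + u₀) := div_mul_cancel₀ _ hM.ne'
  have hexp : Real.exp (t * M) = 1 + u₀ := by
    rw [htM, Real.exp_log (by linarith)]
  have hint_i : ∀ i, Integrable (fun ω => Real.exp (t * X i ω)) ℙ := by
    intro i
    refine Integrable.mono' (integrable_const (Real.exp (t*M)))
      (((hmeas i).const_mul t).exp.aestronglyMeasurable) ?_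
    filter_upwards [hbdd i] with ω h
    rw [Real.norm_eq_abs, abs_of_pos (Real.exp_pos _)]
    exact Real.exp_le_exp.2 (mul_le_mul_of_nonneg_left ((le_abs_self _).trans h) ht.le)
  have hint_sum : Integrable (fun ω => Real.exp (t * (∑ i, X i) ω)) ℙ :=
    hindep.integrable_exp_mul_sum hmeas (fun i _ => hint_i i)
  have hset : {ω | α ≤ ∑ i, X i ω} = {ω | α ≤ (∑ i, X i) ω} := by
    ext ω; simp
  have chern := measure_ge_le_exp_mul_mgf (X := ∑ i, X i) (μ := ℙ) α ht.le hint_sum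
  rw [← hset] at chern
  have hmgf : mgf (∑ i, X i) ℙ t ≤ Real.exp (nσ2 / M^2 * (Real.exp (t*M) - 1 - t*M)) := by
    rw [hindep.mgf_sum hmeas Finset.univ]
    calc ∏ i, mgf (X i) ℙ t
        ≤ ∏ i, Real.exp ((σ i)^2 / M^2 * (Real.exp (t*M) - 1 - t*M)) := by
          refine Finset.prod_le_prod (fun i _ => mgf_nonneg) (fun i _ => ?_)
          have := mgf_single_bound (X i) (hmeas i) (hmean i) M hM (hbdd i) t ht.le
          rwa [hvar i] at this
    _ = Real.exp (∑ i, (σ i)^2 / M^2 * (Real.exp (t*M) - 1 - t*M)) := (Real.exp_sum _ _).symm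
    _ = Real.exp (nσ2 / M^2 * (Real.exp (t*M) - 1 - t*M)) := by
          rw [← Finset.sum_mul, ← Finset.sum_div, ← hnσ2]
  have hfinal : Real.exp (-t * α) * Real.exp (nσ2 / M^2 * (Real.exp (t*M) - 1 - t*M))
      = Real.exp (-(nσ2 / M ^ 2) * ((1 + u₀) * Real.log (1 + u₀) - u₀)) := by
    rw [← Real.exp_add, hexp, htM]
    congr 1
    rw [htdef, hu0def]
    field_simp
    ring
  calc (ℙ {ω | α ≤ ∑ i, X i ω}).toReal
      ≤ Real.exp (-t * α) * mgf (∑ i, X i) ℙ t := chern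
  _ ≤ Real.exp (-t * α) * Real.exp (nσ2 / M^2 * (Real.exp (t*M) - 1 - t*M)) := by
      exact mul_le_mul_of_nonneg_left hmgf (Real.exp_pos _).le
  _ = Real.exp (-(nσ2 / M ^ 2) * ((1 + u₀) * Real.log (1 + u₀) - u₀)) := hfinal
end

section
/- Let x_1, …, x_n be independent real-valued random variables on a probability space with E[x_i] = 0, E[x_i²] = σ_i², and |x_i| ≤ M almost surely for all i, where M > 0. Set σ² = (1/n)Σ_{i=1}^n σ_i² > 0. Let α satisfy 0 < α < nM, define A = M²/σ² + nM/α − 1 and B = nM/α − 1, and let Λ ≥ 0 be a real number satisfying (A − Λ)·e^{−Λ} = B (equivalently, Λ = A − W(B·e^A), where W is the Lambert W function). Then P(Σ_{i=1}^n x_i ≥ α) ≤ exp( −Λα/M + n·ln(1 + (σ²/M²)(e^Λ − 1 − Λ)) ). -/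
open MeasureTheory ProbabilityTheory
open scoped Nat

lemma exp_sub_eq_tsum (u : ℝ) :
    Real.exp u - 1 - u = ∑' k : ℕ, u ^ (k + 2) / (k + 2)! := by
  have hsum : Summable (fun n : ℕ => u ^ n / n !) := Real.summable_pow_div_factorial u
  have h := Summable.sum_add_tsum_nat_add 2 hsum
  have hexp : Real.exp u = ∑' n : ℕ, u ^ n / n ! := by
    rw [Real.exp_eq_exp_ℝ, NormedSpace.exp_eq_tsum_div]
  rw [hexp, ← h]
  simp [Finset.sum_range_succ]
  ring

lemma exp_mul_le_aux {t M x : ℝ} (ht : 0 ≤ t) (hM : 0 < M) (hx : |x| ≤ M) :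
    Real.exp (t * x) ≤ 1 + t * x + x ^ 2 / M ^ 2 * (Real.exp (t * M) - 1 - t * M) := by
  have h1 := exp_sub_eq_tsum (t * x)
  have h2 := exp_sub_eq_tsum (t * M)
  have hsum1 : Summable (fun k : ℕ => (t * x) ^ (k + 2) / (k + 2)!) :=
    (summable_nat_add_iff 2).mpr (Real.summable_pow_div_factorial (t * x))
  have hsum2 : Summable (fun k : ℕ => x ^ 2 / M ^ 2 * ((t * M) ^ (k + 2) / (k + 2)!)) :=
    ((summable_nat_add_iff 2).mpr (Real.summable_pow_div_factorial (t * M))).mul_left _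
  have hterm : ∀ k : ℕ, (t * x) ^ (k + 2) / (k + 2)! ≤
      x ^ 2 / M ^ 2 * ((t * M) ^ (k + 2) / (k + 2)!) := by
    intro k
    have hnum : (t * x) ^ (k + 2) ≤ x ^ 2 / M ^ 2 * (t * M) ^ (k + 2) := by
      have h1 : (t * x) ^ (k + 2) ≤ t ^ (k + 2) * (x ^ 2 * M ^ k) := by
        calc (t * x) ^ (k + 2) ≤ |(t * x) ^ (k + 2)| := le_abs_self _
          _ = t ^ (k + 2) * (|x| ^ 2 * |x| ^ k) := by
              rw [abs_pow, abs_mul, abs_of_nonneg ht, mul_pow]; ring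
          _ ≤ t ^ (k + 2) * (|x| ^ 2 * M ^ k) := by
              have hk : |x| ^ k ≤ M ^ k := pow_le_pow_left₀ (abs_nonneg x) hx k
              have h2 := mul_le_mul_of_nonneg_left hk (sq_nonneg |x|)
              exact mul_le_mul_of_nonneg_left (by simpa using h2) (by positivity)
          _ = t ^ (k + 2) * (x ^ 2 * M ^ k) := by rw [sq_abs]
      have h2 : x ^ 2 / M ^ 2 * (t * M) ^ (k + 2) = t ^ (k + 2) * (x ^ 2 * M ^ k) := by
        field_simp
        ring
      linarith
    have hfac : (0:ℝ) < (k + 2)! := by positivity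
    rw [div_le_iff₀ hfac] at *
    calc (t * x) ^ (k + 2) ≤ x ^ 2 / M ^ 2 * (t * M) ^ (k + 2) := hnum
      _ = x ^ 2 / M ^ 2 * ((t * M) ^ (k + 2) / (k + 2)!) * (k + 2)! := by
          field_simp
  have hts := Summable.tsum_le_tsum hterm hsum1 hsum2
  rw [← h1, tsum_mul_left, ← h2] at hts
  linarith

/-- The bounding function `U(n, α, M, σ²)` of the improved Bennett inequality,
with `Λ` the solution of `(A − Λ)e^{−Λ} = B` passed as a parameter. -/
noncomputable def U (n : ℕ) (α M σ2 Λ : ℝ) : ℝ :=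
  Real.exp (-(Λ * α / M) + n * Real.log (1 + σ2 / M ^ 2 * (Real.exp Λ - 1 - Λ)))

/-- **Improved Bennett inequality** (Theorem 2 of the paper): for independent, mean-zero,
almost-surely bounded random variables, with `σ² = (1/n)∑ σᵢ² > 0`, `0 < α < n·M`,
`A = M²/σ² + nM/α − 1`, `B = nM/α − 1`, and `Λ ≥ 0` satisfying `(A − Λ)e^{−Λ} = B`
(i.e. `Λ = A − W(B·e^A)`), we have `P(∑ xᵢ ≥ α) ≤ U(n, α, M, σ²)`. -/
theorem improved_bennett_inequality
    {Ω : Type*} [MeasureSpace Ω] [IsProbabilityMeasure (ℙ : Measure Ω)]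
    (n : ℕ) (X : Fin n → Ω → ℝ) (σ : Fin n → ℝ) (M : ℝ) (hM : 0 < M)
    (hmeas : ∀ i, Measurable (X i))
    (hindep : iIndepFun X ℙ)
    (hmean : ∀ i, ∫ ω, X i ω = 0)
    (hvar : ∀ i, ∫ ω, (X i ω) ^ 2 = (σ i) ^ 2)
    (hbdd : ∀ i, ∀ᵐ ω ∂ℙ, |X i ω| ≤ M)
    (σ2 : ℝ) (hσ2 : σ2 = (1 / n) * ∑ i, (σ i) ^ 2) (hσ2pos : 0 < σ2)
    (α : ℝ) (hα0 : 0 < α) (hαn : α < n * M)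
    (Λ : ℝ) (hΛ0 : 0 ≤ Λ)
    (hΛ : (M ^ 2 / σ2 + n * M / α - 1 - Λ) * Real.exp (-Λ) = n * M / α - 1) :
    (ℙ {ω | α ≤ ∑ i, X i ω}).toReal ≤ U n α M σ2 Λ := by
  classical
  have hMne : M ≠ 0 := hM.ne'
  set t : ℝ := Λ / M with ht_def
  have ht : 0 ≤ t := div_nonneg hΛ0 hM.le
  have htM : t * M = Λ := div_mul_cancel₀ Λ hMne
  set g : ℝ := Real.exp Λ - 1 - Λ with hg_def
  have hg0 : 0 ≤ g := by
    have := Real.add_one_le_exp Λ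
    simp only [hg_def]; linarith
  have hn : 0 < n := by
    rcases Nat.eq_zero_or_pos n with h | h
    · subst h; simp at hαn; linarith
    · exact h
  have hnR : (0:ℝ) < n := by exact_mod_cast hn
  -- integrability facts
  have hXint : ∀ i, Integrable (X i) := fun i =>
    Integrable.mono' (integrable_const M) (hmeas i).aestronglyMeasurable
      ((hbdd i).mono fun ω h => by simpa [Real.norm_eq_abs] using h)
  have hX2int : ∀ i, Integrable (fun ω => X i ω ^ 2) := fun i =>
    Integrable.mono' (integrable_const (M ^ 2)) ((hmeas i).pow_const 2).aestronglyMeasurable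
      ((hbdd i).mono fun ω h => by
        rw [Real.norm_eq_abs, abs_pow]
        exact pow_le_pow_left₀ (abs_nonneg _) h 2)
  have hexpint : ∀ i, Integrable (fun ω => Real.exp (t * X i ω)) := fun i =>
    Integrable.mono' (integrable_const (Real.exp (t * M)))
      ((hmeas i).const_mul t).exp.aestronglyMeasurable
      ((hbdd i).mono fun ω h => by
        rw [Real.norm_eq_abs, abs_of_pos (Real.exp_pos _), Real.exp_le_exp]
        exact mul_le_mul_of_nonneg_left (le_of_abs_le h) ht)
  -- mgf bound per variable
  have hmgf : ∀ i, mgf (X i) ℙ t ≤ 1 + (σ i) ^ 2 / M ^ 2 * g := by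
    intro i
    have hrhs1 : Integrable (fun ω => 1 + t * X i ω) :=
      (integrable_const 1).add ((hXint i).const_mul t)
    have hrhs2 : Integrable (fun ω => g / M ^ 2 * X i ω ^ 2) := (hX2int i).const_mul _
    have hfun : ∀ᵐ ω ∂ℙ, Real.exp (t * X i ω) ≤ (1 + t * X i ω) + g / M ^ 2 * X i ω ^ 2 :=
      (hbdd i).mono fun ω h => by
        have h1 := exp_mul_le_aux ht hM h
        rw [htM] at h1
        have heq : X i ω ^ 2 / M ^ 2 * g = g / M ^ 2 * X i ω ^ 2 := by ring
        rw [← hg_def] at h1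
        linarith [h1, heq]
    have hineq := integral_mono_ae (hexpint i) (hrhs1.add hrhs2) hfun
    have hval : ∫ ω, ((1 + t * X i ω) + g / M ^ 2 * X i ω ^ 2) =
        1 + (σ i) ^ 2 / M ^ 2 * g := by
      rw [integral_add hrhs1 hrhs2, integral_add (integrable_const 1) ((hXint i).const_mul t),
        integral_const, integral_const_mul, integral_const_mul, hmean i, hvar i]
      simp only [Measure.real, measure_univ, ENNReal.toReal_one, smul_eq_mul, mul_one, mul_zero, add_zero]
      ring
    rw [mgf]
    calc ∫ ω, Real.exp (t * X i ω) ≤ _ := hineq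
      _ = 1 + (σ i) ^ 2 / M ^ 2 * g := hval
  -- Chernoff
  have hS_int : Integrable (fun ω => Real.exp (t * (∑ i, X i) ω)) :=
    hindep.integrable_exp_mul_sum hmeas (fun i _ => hexpint i)
  have hcher := measure_ge_le_exp_mul_mgf (μ := ℙ) (X := ∑ i, X i) α ht hS_int
  rw [hindep.mgf_sum hmeas] at hcher
  -- AM-GM
  set a : Fin n → ℝ := fun i => 1 + (σ i) ^ 2 / M ^ 2 * g with ha_def
  have ha0 : ∀ i, 0 ≤ a i := fun i => by
    have : 0 ≤ (σ i) ^ 2 / M ^ 2 * g := by positivity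
    simp only [ha_def]; linarith
  set b : ℝ := 1 + σ2 / M ^ 2 * g with hb_def
  have hb0 : 0 < b := by
    have : 0 ≤ σ2 / M ^ 2 * g := by positivity
    simp only [hb_def]; linarith
  have hmean_a : ∑ i, (1 / (n:ℝ)) * a i = b := by
    rw [← Finset.mul_sum]
    simp only [ha_def, hb_def, Finset.sum_add_distrib, Finset.sum_const, Finset.card_univ,
      Fintype.card_fin, nsmul_eq_mul, mul_one, hσ2]
    rw [← Finset.sum_mul, ← Finset.sum_div]
    field_simp
  have hamgm : ∏ i, a i ≤ b ^ n := by
    have hw : ∑ _i : Fin n, (1 / (n:ℝ)) = 1 := by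
      simp [Finset.sum_const, Finset.card_univ]
      field_simp
    have hgm := Real.geom_mean_le_arith_mean_weighted Finset.univ (fun _ => 1 / (n:ℝ)) a
      (fun i _ => by positivity) hw (fun i _ => ha0 i)
    rw [hmean_a] at hgm
    have hprod_eq : (∏ i, a i ^ ((1:ℝ) / n)) ^ n = ∏ i, a i := by
      rw [← Finset.prod_pow]
      refine Finset.prod_congr rfl fun i _ => ?_
      rw [← Real.rpow_natCast (a i ^ ((1:ℝ) / n)) n, ← Real.rpow_mul (ha0 i),
        one_div_mul_cancel (by exact_mod_cast hn.ne' : (n:ℝ) ≠ 0), Real.rpow_one]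
    calc ∏ i, a i = (∏ i, a i ^ ((1:ℝ) / n)) ^ n := hprod_eq.symm
      _ ≤ b ^ n := pow_le_pow_left₀ (Finset.prod_nonneg fun i _ => Real.rpow_nonneg (ha0 i) _)
          hgm n
  -- assemble
  have hU : U n α M σ2 Λ = Real.exp (-t * α) * b ^ n := by
    have hb' : 1 + σ2 / M ^ 2 * (Real.exp Λ - 1 - Λ) = b := by rw [hb_def, hg_def]
    rw [U, Real.exp_add, hb', Real.exp_nat_mul, Real.exp_log hb0]
    congr 2
    rw [ht_def]; ring
  have hset : {ω | α ≤ ∑ i, X i ω} = {ω | α ≤ (∑ i, X i) ω} := by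
    ext ω; simp [Finset.sum_apply]
  rw [hset, hU]
  calc (ℙ {ω | α ≤ (∑ i, X i) ω}).toReal
      ≤ Real.exp (-t * α) * ∏ i, mgf (X i) ℙ t := hcher
    _ ≤ Real.exp (-t * α) * (∏ i, a i) := by
        refine mul_le_mul_of_nonneg_left ?_ (Real.exp_pos _).le
        refine Finset.prod_le_prod (fun i _ => mgf_nonneg) (fun i _ => ?_)
        simp only [ha_def]
        exact hmgf i
    _ ≤ Real.exp (-t * α) * b ^ n :=
        mul_le_mul_of_nonneg_left hamgm (Real.exp_pos _).le
end

section
/- Let q_1, …, q_n ∈ (0, 1/2) and r_1, …, r_n ∈ (0, 1/2), and set w1_i = ln((1−r_i)/q_i) and w0_i = ln((1−q_i)/r_i). Let y_1, …, y_n be independent {0,1}-valued random variables with P(y_i = 1) = q_i, and let S = Σ_{i=1}^n ( w1_i·y_i − w0_i·(1−y_i) ). Define α = γ − Σ_{i=1}^n ( q_i·w1_i − (1−q_i)·w0_i ), σ² = (1/n)·Σ_{i=1}^n q_i(1−q_i)(w1_i + w0_i)², and M = max_{1≤i≤n} max{ (1−q_i)(w1_i + w0_i), q_i(w1_i + w0_i)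 }. Then for every threshold γ such that 0 < α < n·M, and every p ∈ [0,1], P(S > γ) + (1−p)·P(S = γ) ≤ U(n, α, M, σ²). -/
open MeasureTheory ProbabilityTheory

open Real intervalIntegral in
lemma integral_repr (u : ℝ) :
    ∫ v in (0:ℝ)..1, u ^ 2 * (1 - v) * Real.exp (v * u) = Real.exp u - 1 - u := by
  have h : ∀ v ∈ Set.uIcc (0:ℝ) 1,
      HasDerivAt (fun v : ℝ => (1 - v) * u * Real.exp (v * u) + Real.exp (v * u))
        (u ^ 2 * (1 - v) * Real.exp (v * u)) v := by
    intro v _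
    have h1 : HasDerivAt (fun v : ℝ => v * u) u v := by
      simpa using (hasDerivAt_id v).mul_const u
    have he : HasDerivAt (fun v : ℝ => Real.exp (v * u)) (Real.exp (v * u) * u) v := h1.exp
    have hA : HasDerivAt (fun v : ℝ => (1 - v) * u) (-u) v := by
      simpa using ((hasDerivAt_const v (1:ℝ)).sub (hasDerivAt_id v)).mul_const u
    have := (hA.mul he).add he
    refine this.congr_deriv ?_
    ring
  have hint : IntervalIntegrable (fun v => u ^ 2 * (1 - v) * Real.exp (v * u))
      MeasureTheory.volume 0 1 := by
    apply Continuous.intervalIntegrable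
    continuity
  rw [intervalIntegral.integral_eq_sub_of_hasDerivAt h hint]
  simp
  ring

lemma key_ineq {u s : ℝ} (h : u ≤ s) :
    (Real.exp u - 1 - u) * s ^ 2 ≤ u ^ 2 * (Real.exp s - 1 - s) := by
  rw [← integral_repr u, ← integral_repr s, ← intervalIntegral.integral_mul_const,
    ← intervalIntegral.integral_const_mul]
  apply intervalIntegral.integral_mono_on zero_le_one
  · apply Continuous.intervalIntegrable; continuity
  · apply Continuous.intervalIntegrable; continuity
  · intro v hv
    have hv0 : 0 ≤ v := hv.1
    have : Real.exp (v * u) ≤ Real.exp (v * s) :=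
      Real.exp_le_exp.2 (mul_le_mul_of_nonneg_left h hv0)
    have h1v : 0 ≤ 1 - v := by linarith [hv.2]
    have hc : (0:ℝ) ≤ u ^ 2 * s ^ 2 * (1 - v) := by positivity
    nlinarith [mul_le_mul_of_nonneg_left this hc]

lemma exp_le_quad {t M x : ℝ} (ht : 0 ≤ t) (hM : 0 < M) (hx : x ≤ M) :
    Real.exp (t * x) ≤ 1 + t * x + x ^ 2 / M ^ 2 * (Real.exp (t * M) - 1 - t * M) := by
  rcases ht.eq_or_lt with h | h
  · simp [← h]
  · have hk := key_ineq (mul_le_mul_of_nonneg_left hx h.le)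
    have hM2 : (0:ℝ) < M ^ 2 := by positivity
    have h2 : (Real.exp (t * x) - 1 - t * x) * M ^ 2 ≤ x ^ 2 * (Real.exp (t * M) - 1 - t * M) := by
      have ht2 : (0:ℝ) < t ^ 2 := by positivity
      refine le_of_mul_le_mul_right ?_ ht2
      nlinarith [hk]
    rw [div_mul_eq_mul_div, ← sub_nonneg]
    rw [← sub_nonneg] at h2
    have := div_nonneg h2 hM2.le
    rw [sub_div] at this
    calc (0:ℝ) ≤ x ^ 2 * (Real.exp (t * M) - 1 - t * M) / M ^ 2
          - (Real.exp (t * x) - 1 - t * x) * M ^ 2 / M ^ 2 := this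
      _ = 1 + t * x + x ^ 2 * (Real.exp (t * M) - 1 - t * M) / M ^ 2 - Real.exp (t * x) := by
          field_simp; ring


lemma amgm {n : ℕ} (hn : 0 < n) (a : Fin n → ℝ) (ha : ∀ i, 0 ≤ a i) :
    ∏ i, a i ≤ ((∑ i, a i) / n) ^ n := by
  have hn' : (n:ℝ) ≠ 0 := Nat.cast_ne_zero.2 hn.ne'
  have hw : ∑ _i : Fin n, (1/n : ℝ) = 1 := by
    simp [Finset.sum_const]
    field_simp
  have h := Real.geom_mean_le_arith_mean_weighted Finset.univ (fun _ => (1/n:ℝ)) a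
    (fun i _ => by positivity) hw (fun i _ => ha i)
  have hprod : (∏ i, a i ^ (1/n:ℝ)) ^ n = ∏ i, a i := by
    rw [← Finset.prod_pow]
    refine Finset.prod_congr rfl fun i _ => ?_
    rw [← Real.rpow_natCast (a i ^ (1/n:ℝ)) n, ← Real.rpow_mul (ha i)]
    simp [hn']
  have hsum : ∑ i, (1/n:ℝ) * a i = (∑ i, a i) / n := by
    rw [← Finset.mul_sum]; ring
  calc ∏ i, a i = (∏ i, a i ^ (1/n:ℝ)) ^ n := hprod.symm
    _ ≤ ((∑ i, a i) / n) ^ n := by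
        apply pow_le_pow_left₀ (Finset.prod_nonneg fun i _ => Real.rpow_nonneg (ha i) _)
        rw [← hsum]; exact h

set_option maxHeartbeats 1000000 in
/-- **Proposition 1** of the paper: upper bound on the false-alarm probability of a
cluster's randomized likelihood-ratio decision under `H₀`, via the improved Bennett
inequality. Sensor `i` reports `yᵢ = 1` with probability `qᵢ` under `H₀`, the weights
are `w1ᵢ = ln((1−rᵢ)/qᵢ)`, `w0ᵢ = ln((1−qᵢ)/rᵢ)`, and the cluster decision statistic is
`S = ∑ᵢ (w1ᵢ·yᵢ − w0ᵢ·(1−yᵢ))`; then `P(S > γ) + (1−p)·P(S = γ) ≤ U(n, α, M, σ²)`. -/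
theorem cluster_false_alarm_bound
    {Ω : Type*} [MeasureSpace Ω] [IsProbabilityMeasure (ℙ : Measure Ω)]
    (n : ℕ) (q r : Fin n → ℝ)
    (hq : ∀ i, q i ∈ Set.Ioo (0 : ℝ) (1 / 2)) (hr : ∀ i, r i ∈ Set.Ioo (0 : ℝ) (1 / 2))
    (w1 w0 : Fin n → ℝ)
    (hw1 : ∀ i, w1 i = Real.log ((1 - r i) / q i))
    (hw0 : ∀ i, w0 i = Real.log ((1 - q i) / r i))
    (y : Fin n → Ω → ℝ)
    (hmeas : ∀ i, Measurable (y i))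
    (h01 : ∀ i ω, y i ω = 0 ∨ y i ω = 1)
    (hindep : iIndepFun y ℙ)
    (hber : ∀ i, (ℙ {ω | y i ω = 1}).toReal = q i)
    (γ α σ2 M : ℝ)
    (hα : α = γ - ∑ i, (q i * w1 i - (1 - q i) * w0 i))
    (hσ2 : σ2 = (1 / n) * ∑ i, q i * (1 - q i) * (w1 i + w0 i) ^ 2)
    (hM : IsGreatest
      (Set.range fun i => max ((1 - q i) * (w1 i + w0 i)) (q i * (w1 i + w0 i))) M)
    (hα0 : 0 < α) (hαn : α < n * M)
    (Λ : ℝ) (hΛ0 : 0 ≤ Λ)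
    (hΛ : (M ^ 2 / σ2 + n * M / α - 1 - Λ) * Real.exp (-Λ) = n * M / α - 1)
    (p : ℝ) (hp : p ∈ Set.Icc (0 : ℝ) 1) :
    (ℙ {ω | γ < ∑ i, (w1 i * y i ω - w0 i * (1 - y i ω))}).toReal
      + (1 - p) * (ℙ {ω | ∑ i, (w1 i * y i ω - w0 i * (1 - y i ω)) = γ}).toReal
      ≤ U n α M σ2 Λ := by
  clear hΛ
  -- basic positivity facts
  have hn : 0 < n := by
    rcases Nat.eq_zero_or_pos n with h | h
    · subst h; norm_num at hαn; linarith
    · exact h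
  have hnR : (0:ℝ) < n := Nat.cast_pos.2 hn
  have hMpos : 0 < M := by nlinarith
  have hw1pos : ∀ i, 0 < w1 i := by
    intro i
    obtain ⟨hq1, hq2⟩ := hq i
    obtain ⟨hr1, hr2⟩ := hr i
    rw [hw1 i]
    apply Real.log_pos
    rw [lt_div_iff₀ hq1]; linarith
  have hw0pos : ∀ i, 0 < w0 i := by
    intro i
    obtain ⟨hq1, hq2⟩ := hq i
    obtain ⟨hr1, hr2⟩ := hr i
    rw [hw0 i]
    apply Real.log_pos
    rw [lt_div_iff₀ hr1]; linarith
  have hcpos : ∀ i, 0 < w1 i + w0 i := fun i => by linarith [hw1pos i, hw0pos i]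
  have hub : ∀ i, (1 - q i) * (w1 i + w0 i) ≤ M ∧ q i * (w1 i + w0 i) ≤ M := by
    intro i
    have h := hM.2 (Set.mem_range_self (f := fun i =>
      max ((1 - q i) * (w1 i + w0 i)) (q i * (w1 i + w0 i))) i)
    exact ⟨le_trans (le_max_left _ _) h, le_trans (le_max_right _ _) h⟩
  have hσ2nonneg : 0 ≤ σ2 := by
    rw [hσ2]
    apply mul_nonneg (by positivity)
    apply Finset.sum_nonneg
    intro i _
    have h1 := (hq i).1; have h2 := (hq i).2
    exact mul_nonneg (mul_nonneg h1.le (by linarith)) (sq_nonneg _)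
  set t := Λ / M with hts
  have ht : 0 ≤ t := div_nonneg hΛ0 hMpos.le
  have htM : t * M = Λ := div_mul_cancel₀ Λ hMpos.ne'
  have hg0 : 0 ≤ Real.exp Λ - 1 - Λ := by nlinarith [Real.add_one_le_exp Λ]
  set X : Fin n → Ω → ℝ := fun i ω => w1 i * y i ω - w0 i * (1 - y i ω) with hXdef
  have hXmeas : ∀ i, Measurable (X i) := fun i =>
    ((hmeas i).const_mul _).sub ((measurable_const.sub (hmeas i)).const_mul _)
  set S : Ω → ℝ := fun ω => ∑ i, X i ω with hSdef
  have hSmeas : Measurable S := Finset.measurable_sum _ fun i _ => hXmeas i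
  have hSg : ∀ ω, ∑ i, (w1 i * y i ω - w0 i * (1 - y i ω)) = S ω := fun ω => rfl
  simp only [hSg]
  -- Step A : reduce to P(S ≥ γ)
  have hseteq : MeasurableSet {ω | S ω = γ} := hSmeas (measurableSet_singleton γ)
  have hunion : {ω | γ ≤ S ω} = {ω | γ < S ω} ∪ {ω | S ω = γ} := by
    ext ω
    simp only [Set.mem_setOf_eq, Set.mem_union]
    constructor
    · intro h; rcases lt_or_eq_of_le h with h | h
      · exact Or.inl h
      · exact Or.inr h.symm
    · rintro (h | h)
      · exact h.le
      · exact h.ge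
  have hdisj : Disjoint {ω | γ < S ω} {ω | S ω = γ} := by
    rw [Set.disjoint_left]
    intro ω h1 h2
    simp only [Set.mem_setOf_eq] at h1 h2
    exact absurd h2 h1.ne'
  have hPA : (ℙ {ω | γ ≤ S ω}).toReal
      = (ℙ {ω | γ < S ω}).toReal + (ℙ {ω | S ω = γ}).toReal := by
    rw [hunion, measure_union hdisj hseteq,
      ENNReal.toReal_add (measure_ne_top _ _) (measure_ne_top _ _)]
  have hstepA : (ℙ {ω | γ < S ω}).toReal + (1 - p) * (ℙ {ω | S ω = γ}).toReal
      ≤ (ℙ {ω | γ ≤ S ω}).toReal := by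
    rw [hPA]
    have h0 : 0 ≤ (ℙ {ω | S ω = γ}).toReal := ENNReal.toReal_nonneg
    nlinarith [hp.1, hp.2]
  -- Step B : Chernoff
  have hXle : ∀ i ω, X i ω ≤ w1 i := by
    intro i ω
    rcases h01 i ω with h | h <;>
      simp only [hXdef, h] <;> [skip; skip] <;>
      nlinarith [hw0pos i, hw1pos i]
  have hSle : ∀ ω, S ω ≤ ∑ i, w1 i := fun ω => Finset.sum_le_sum fun i _ => hXle i ω
  have hintS : Integrable (fun ω => Real.exp (t * S ω)) ℙ := by
    refine ⟨((hSmeas.const_mul t).exp).aestronglyMeasurable, ?_⟩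
    apply HasFiniteIntegral.of_bounded (C := Real.exp (t * ∑ i, w1 i))
    filter_upwards with ω
    rw [Real.norm_eq_abs, abs_of_pos (Real.exp_pos _)]
    exact Real.exp_le_exp.2 (mul_le_mul_of_nonneg_left (hSle ω) ht)
  have hchern := measure_ge_le_exp_mul_mgf (μ := ℙ) (X := S) γ ht hintS
  -- Step C : mgf of sum and of each factor
  have hindepX : iIndepFun X ℙ := by
    have := hindep.comp (fun i x => w1 i * x - w0 i * (1 - x))
      (fun i => (measurable_id.const_mul _).sub
        ((measurable_const.sub measurable_id).const_mul _))
    exact this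
  have hmgfS : mgf S ℙ t = ∏ i, mgf (X i) ℙ t := by
    have hSfun : S = ∑ i, X i := by
      funext ω; rw [hSdef]; simp [Finset.sum_apply]
    rw [hSfun]
    exact hindepX.mgf_sum hXmeas Finset.univ
  have hyint : ∀ i, Integrable (y i) ℙ := by
    intro i
    refine ⟨(hmeas i).aestronglyMeasurable, ?_⟩
    apply HasFiniteIntegral.of_bounded (C := 1)
    filter_upwards with ω
    rcases h01 i ω with h | h <;> simp [h]
  have hEy : ∀ i, ∫ ω, y i ω ∂ℙ = q i := by
    intro i
    rw [← hber i]
    have hind : y i = Set.indicator {ω | y i ω = 1} 1 := by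
      funext ω
      rcases h01 i ω with h | h
      · rw [Set.indicator_of_notMem]
        · exact h
        · simp [Set.mem_setOf_eq, h]
      · rw [Set.indicator_of_mem]
        · exact h
        · exact h
    conv_lhs => rw [hind]
    exact integral_indicator_one ((hmeas i) (measurableSet_singleton 1))
  have hmgfXi : ∀ i, mgf (X i) ℙ t
      = q i * Real.exp (t * w1 i) + (1 - q i) * Real.exp (-(t * w0 i)) := by
    intro i
    have hpt : ∀ ω, Real.exp (t * X i ω)
        = Real.exp (t * w1 i) * y i ω + Real.exp (-(t * w0 i)) * (1 - y i ω) := by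
      intro ω
      rcases h01 i ω with h | h <;> simp only [hXdef, h] <;> ring_nf <;> simp
    have h1 : Integrable (fun ω => Real.exp (t * w1 i) * y i ω) ℙ :=
      (hyint i).const_mul _
    have h2 : Integrable (fun ω => Real.exp (-(t * w0 i)) * (1 - y i ω)) ℙ :=
      ((integrable_const (1:ℝ)).sub (hyint i)).const_mul _
    calc mgf (X i) ℙ t = ∫ ω, Real.exp (t * X i ω) ∂ℙ := rfl
      _ = ∫ ω, (Real.exp (t * w1 i) * y i ω + Real.exp (-(t * w0 i)) * (1 - y i ω)) ∂ℙ :=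
          integral_congr_ae (Filter.Eventually.of_forall hpt)
      _ = Real.exp (t * w1 i) * (∫ ω, y i ω ∂ℙ)
          + Real.exp (-(t * w0 i)) * (∫ ω, (1 - y i ω) ∂ℙ) := by
          rw [integral_add h1 h2, integral_const_mul, integral_const_mul]
      _ = q i * Real.exp (t * w1 i) + (1 - q i) * Real.exp (-(t * w0 i)) := by
          rw [integral_sub (integrable_const 1) (hyint i), hEy i]
          simp
          ring
  -- Step D : per-factor bound
  have hfac : ∀ i, mgf (X i) ℙ t ≤ Real.exp (t * (q i * w1 i - (1 - q i) * w0 i)) *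
      (1 + q i * (1 - q i) * (w1 i + w0 i) ^ 2 / M ^ 2 * (Real.exp Λ - 1 - Λ)) := by
    intro i
    rw [hmgfXi i]
    obtain ⟨hq0, hq2⟩ := hq i
    have hc := hcpos i
    have e1 : t * w1 i = t * (q i * w1 i - (1 - q i) * w0 i)
        + t * ((1 - q i) * (w1 i + w0 i)) := by ring
    have e0 : -(t * w0 i) = t * (q i * w1 i - (1 - q i) * w0 i)
        + t * (-(q i * (w1 i + w0 i))) := by ring
    rw [e1, e0, Real.exp_add, Real.exp_add]
    have b1 := exp_le_quad ht hMpos (hub i).1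
    have hz0 : -(q i * (w1 i + w0 i)) ≤ M := by nlinarith
    have b0 := exp_le_quad ht hMpos hz0
    rw [htM] at b1 b0
    have hq1' : (0:ℝ) ≤ 1 - q i := by linarith
    have hinner : q i * Real.exp (t * ((1 - q i) * (w1 i + w0 i)))
        + (1 - q i) * Real.exp (t * (-(q i * (w1 i + w0 i))))
        ≤ 1 + q i * (1 - q i) * (w1 i + w0 i) ^ 2 / M ^ 2 * (Real.exp Λ - 1 - Λ) := by
      have hsum := add_le_add (mul_le_mul_of_nonneg_left b1 hq0.le)
        (mul_le_mul_of_nonneg_left b0 hq1')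
      have heq : q i * (1 + t * ((1 - q i) * (w1 i + w0 i))
            + ((1 - q i) * (w1 i + w0 i)) ^ 2 / M ^ 2 * (Real.exp Λ - 1 - Λ))
          + (1 - q i) * (1 + t * (-(q i * (w1 i + w0 i)))
            + (-(q i * (w1 i + w0 i))) ^ 2 / M ^ 2 * (Real.exp Λ - 1 - Λ))
          = 1 + q i * (1 - q i) * (w1 i + w0 i) ^ 2 / M ^ 2 * (Real.exp Λ - 1 - Λ) := by
        field_simp
        ring
      linarith [hsum, heq.le, heq.ge]
    have hE := (Real.exp_pos (t * (q i * w1 i - (1 - q i) * w0 i))).le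
    calc q i * (Real.exp (t * (q i * w1 i - (1 - q i) * w0 i))
            * Real.exp (t * ((1 - q i) * (w1 i + w0 i))))
          + (1 - q i) * (Real.exp (t * (q i * w1 i - (1 - q i) * w0 i))
            * Real.exp (t * (-(q i * (w1 i + w0 i)))))
        = Real.exp (t * (q i * w1 i - (1 - q i) * w0 i))
          * (q i * Real.exp (t * ((1 - q i) * (w1 i + w0 i)))
            + (1 - q i) * Real.exp (t * (-(q i * (w1 i + w0 i))))) := by ring
      _ ≤ _ := mul_le_mul_of_nonneg_left hinner hE
  -- Step E : product bound via AM-GM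
  have hxpos : (0:ℝ) < 1 + σ2 / M ^ 2 * (Real.exp Λ - 1 - Λ) := by
    have : 0 ≤ σ2 / M ^ 2 * (Real.exp Λ - 1 - Λ) := by positivity
    linarith
  have hprodbound : ∏ i, mgf (X i) ℙ t
      ≤ Real.exp (t * ∑ i, (q i * w1 i - (1 - q i) * w0 i))
        * (1 + σ2 / M ^ 2 * (Real.exp Λ - 1 - Λ)) ^ n := by
    calc ∏ i, mgf (X i) ℙ t
        ≤ ∏ i, (Real.exp (t * (q i * w1 i - (1 - q i) * w0 i))
            * (1 + q i * (1 - q i) * (w1 i + w0 i) ^ 2 / M ^ 2 * (Real.exp Λ - 1 - Λ))) :=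
          by
            apply Finset.prod_le_prod
            · intro i _; exact mgf_nonneg
            · intro i _; exact hfac i
      _ = Real.exp (t * ∑ i, (q i * w1 i - (1 - q i) * w0 i))
          * ∏ i, (1 + q i * (1 - q i) * (w1 i + w0 i) ^ 2 / M ^ 2 * (Real.exp Λ - 1 - Λ)) := by
          rw [Finset.prod_mul_distrib, ← Real.exp_sum, Finset.mul_sum]
      _ ≤ _ := by
          apply mul_le_mul_of_nonneg_left _ (Real.exp_pos _).le
          have hA := amgm hn (fun i => 1 + q i * (1 - q i) * (w1 i + w0 i) ^ 2 / M ^ 2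
            * (Real.exp Λ - 1 - Λ)) (fun i => by
              have h1 := (hq i).1; have h2 := (hq i).2
              have h3 : 0 ≤ q i * (1 - q i) * (w1 i + w0 i) ^ 2 / M ^ 2
                  * (Real.exp Λ - 1 - Λ) :=
                mul_nonneg (div_nonneg (mul_nonneg (mul_nonneg h1.le (by linarith))
                  (sq_nonneg _)) (sq_nonneg M)) hg0
              linarith)
          have hAve : (∑ i, (1 + q i * (1 - q i) * (w1 i + w0 i) ^ 2 / M ^ 2
              * (Real.exp Λ - 1 - Λ))) / n
              = 1 + σ2 / M ^ 2 * (Real.exp Λ - 1 - Λ) := by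
            rw [Finset.sum_add_distrib, Finset.sum_const, Finset.card_univ, Fintype.card_fin,
              hσ2]
            have : ∑ i, q i * (1 - q i) * (w1 i + w0 i) ^ 2 / M ^ 2 * (Real.exp Λ - 1 - Λ)
                = (∑ i, q i * (1 - q i) * (w1 i + w0 i) ^ 2) / M ^ 2
                  * (Real.exp Λ - 1 - Λ) := by
              rw [Finset.sum_div, Finset.sum_mul]
            rw [this]
            field_simp [hnR.ne', hMpos.ne']
            rw [nsmul_eq_mul, mul_one]; ring
          rw [← hAve]
          exact hA
  -- Step F : final computation
  calc (ℙ {ω | γ < S ω}).toReal + (1 - p) * (ℙ {ω | S ω = γ}).toReal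
      ≤ (ℙ {ω | γ ≤ S ω}).toReal := hstepA
    _ ≤ Real.exp (-t * γ) * mgf S ℙ t := hchern
    _ ≤ Real.exp (-t * γ) * (Real.exp (t * ∑ i, (q i * w1 i - (1 - q i) * w0 i))
        * (1 + σ2 / M ^ 2 * (Real.exp Λ - 1 - Λ)) ^ n) := by
        rw [hmgfS]
        exact mul_le_mul_of_nonneg_left hprodbound (Real.exp_pos _).le
    _ = U n α M σ2 Λ := by
        have hsumμ : ∑ i, (q i * w1 i - (1 - q i) * w0 i) = γ - α := by linarith [hα]
        rw [U, Real.exp_add, Real.exp_nat_mul, Real.exp_log hxpos, hsumμ, ← mul_assoc,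
          ← Real.exp_add]
        congr 2
        rw [hts]
        field_simp
        ring
end

section
/- Let q_1, …, q_n ∈ (0, 1/2) and r_1, …, r_n ∈ (0, 1/2), and set w1_i = ln((1−r_i)/q_i) and w0_i = ln((1−q_i)/r_i). Let y_1, …, y_n be independent {0,1}-valued random variables with P(y_i = 1) = 1 − r_i, and let S = Σ_{i=1}^n ( w1_i·y_i − w0_i·(1−y_i) ). Define α = Σ_{i=1}^n ( (1−r_i)·w1_i − r_i·w0_i ) − γ, σ² = (1/n)·Σ_{i=1}^n r_i(1−r_i)(w1_i + w0_i)², and M = max_{1≤i≤n} max{ r_i(w1_i + w0_i), (1−r_i)(w1_i + w0_i) }. Then for every threshold γ such that 0 < α < n·M, and every p ∈ [0,1], P(S < γ) + p·P(S = γ) ≤ U(n, α, M, σ²). -/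
open MeasureTheory ProbabilityTheory

set_option maxHeartbeats 1000000

open Nat in
lemma aux_exp_sub_one_sub_eq (x : ℝ) :
    Real.exp x - 1 - x = ∑' k : ℕ, x ^ (k + 2) / ((k + 2)! : ℝ) := by
  have hsum := Real.summable_pow_div_factorial x
  have h1 : Summable (fun k : ℕ => x ^ (k + 1) / (k + 1)!) :=
    hsum.comp_injective fun a b h => by omega
  have hexp : Real.exp x = ∑' k : ℕ, x ^ k / k ! := by
    rw [Real.exp_eq_exp_ℝ, NormedSpace.exp_eq_tsum_div]
  rw [hexp, Summable.tsum_eq_zero_add hsum, Summable.tsum_eq_zero_add h1]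
  simp [Nat.factorial]

lemma aux_key_ineq {u v : ℝ} (huv : |u| ≤ v) :
    v ^ 2 * (Real.exp u - 1 - u) ≤ u ^ 2 * (Real.exp v - 1 - v) := by
  have hv : 0 ≤ v := (abs_nonneg u).trans huv
  rw [aux_exp_sub_one_sub_eq, aux_exp_sub_one_sub_eq, ← tsum_mul_left, ← tsum_mul_left]
  refine Summable.tsum_le_tsum ?_ ?_ ?_
  · intro k
    rw [← mul_div_assoc, ← mul_div_assoc]
    apply div_le_div_of_nonneg_right _ (by positivity)
    · calc v ^ 2 * u ^ (k + 2) = v ^ 2 * (u ^ k * u ^ 2) := by ring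
        _ ≤ v ^ 2 * (v ^ k * u ^ 2) := by
            apply mul_le_mul_of_nonneg_left _ (by positivity)
            apply mul_le_mul_of_nonneg_right _ (by positivity)
            calc u ^ k ≤ |u ^ k| := le_abs_self _
              _ = |u| ^ k := abs_pow u k
              _ ≤ v ^ k := pow_le_pow_left₀ (abs_nonneg u) huv k
        _ = u ^ 2 * v ^ (k + 2) := by ring
  · exact (Summable.comp_injective (Real.summable_pow_div_factorial u)
      (fun a b h => by simpa using h : Function.Injective (· + 2))).mul_left _
  · exact (Summable.comp_injective (Real.summable_pow_div_factorial v)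
      (fun a b h => by simpa using h : Function.Injective (· + 2))).mul_left _

/-- Pointwise Bennett-type bound on the exponential. -/
lemma aux_pointwise {M Λ x : ℝ} (hM : 0 < M) (hΛ : 0 ≤ Λ) (hx : |x| ≤ M) :
    Real.exp (Λ / M * x) ≤ 1 + Λ / M * x + x ^ 2 / M ^ 2 * (Real.exp Λ - 1 - Λ) := by
  rcases hΛ.eq_or_lt with h | h
  · simp [← h]
  · have hu : |Λ / M * x| ≤ Λ := by
      rw [abs_mul, abs_of_pos (div_pos h hM)]
      calc Λ / M * |x| ≤ Λ / M * M := by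
            exact mul_le_mul_of_nonneg_left hx (le_of_lt (div_pos h hM))
        _ = Λ := by field_simp
    have hk := aux_key_ineq hu
    have h2 : (Λ / M * x) ^ 2 * (Real.exp Λ - 1 - Λ)
        = Λ ^ 2 * (x ^ 2 / M ^ 2 * (Real.exp Λ - 1 - Λ)) := by
      field_simp
    rw [h2] at hk
    have := (mul_le_mul_iff_right₀ (by positivity : (0:ℝ) < Λ ^ 2)).mp hk
    linarith

/-- Integral of an affine function of a `{0,1}`-valued random variable. -/
lemma aux_integral_lin {Ω : Type*} [MeasureSpace Ω] [IsProbabilityMeasure (ℙ : Measure Ω)]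
    (y : Ω → ℝ) (hy : Measurable y) (h01 : ∀ ω, y ω = 0 ∨ y ω = 1) (A B : ℝ) :
    ∫ ω, (A * y ω + B * (1 - y ω)) ∂ℙ
      = A * (ℙ {ω | y ω = 1}).toReal + B * (1 - (ℙ {ω | y ω = 1}).toReal) := by
  have hset : MeasurableSet {ω | y ω = 1} := hy (measurableSet_singleton 1)
  have hyind : y = Set.indicator {ω | y ω = 1} (fun _ => (1:ℝ)) := by
    funext ω
    rcases h01 ω with h | h <;> simp [Set.indicator_apply, h]
  have hyint : Integrable y ℙ := by
    refine (integrable_const (1:ℝ)).mono' hy.aestronglyMeasurable ?_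
    filter_upwards with ω
    rcases h01 ω with h | h <;> simp [h]
  have hint : ∫ ω, y ω ∂ℙ = (ℙ {ω | y ω = 1}).toReal := by
    conv_lhs => rw [hyind]
    exact integral_indicator_one hset
  have heq : (fun ω => A * y ω + B * (1 - y ω)) = fun ω => (A - B) * y ω + B := by
    funext ω; ring
  rw [heq, integral_add ((hyint.const_mul _)) (integrable_const B),
    integral_const_mul, hint, integral_const]
  simp
  ring

/-- **Proposition 2** of the paper: upper bound on the missed-detection probability of a
cluster's randomized likelihood-ratio decision under `H₁`, via the improved Bennett
inequality. Sensor `i` reports `yᵢ = 1` with probability `1 − rᵢ` under `H₁`, the weights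
are `w1ᵢ = ln((1−rᵢ)/qᵢ)`, `w0ᵢ = ln((1−qᵢ)/rᵢ)`, and the cluster decision statistic is
`S = ∑ᵢ (w1ᵢ·yᵢ − w0ᵢ·(1−yᵢ))`; then `P(S < γ) + p·P(S = γ) ≤ U(n, α, M, σ²)`. -/
theorem cluster_missed_detection_bound
    {Ω : Type*} [MeasureSpace Ω] [IsProbabilityMeasure (ℙ : Measure Ω)]
    (n : ℕ) (q r : Fin n → ℝ)
    (hq : ∀ i, q i ∈ Set.Ioo (0 : ℝ) (1 / 2)) (hr : ∀ i, r i ∈ Set.Ioo (0 : ℝ) (1 / 2))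
    (w1 w0 : Fin n → ℝ)
    (hw1 : ∀ i, w1 i = Real.log ((1 - r i) / q i))
    (hw0 : ∀ i, w0 i = Real.log ((1 - q i) / r i))
    (y : Fin n → Ω → ℝ)
    (hmeas : ∀ i, Measurable (y i))
    (h01 : ∀ i ω, y i ω = 0 ∨ y i ω = 1)
    (hindep : iIndepFun y ℙ)
    (hber : ∀ i, (ℙ {ω | y i ω = 1}).toReal = 1 - r i)
    (γ α σ2 M : ℝ)
    (hα : α = (∑ i, ((1 - r i) * w1 i - r i * w0 i)) - γ)
    (hσ2 : σ2 = (1 / n) * ∑ i, r i * (1 - r i) * (w1 i + w0 i) ^ 2)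
    (hM : IsGreatest
      (Set.range fun i => max (r i * (w1 i + w0 i)) ((1 - r i) * (w1 i + w0 i))) M)
    (hα0 : 0 < α) (hαn : α < n * M)
    (Λ : ℝ) (hΛ0 : 0 ≤ Λ)
    (hΛ : (M ^ 2 / σ2 + n * M / α - 1 - Λ) * Real.exp (-Λ) = n * M / α - 1)
    (p : ℝ) (hp : p ∈ Set.Icc (0 : ℝ) 1) :
    (ℙ {ω | ∑ i, (w1 i * y i ω - w0 i * (1 - y i ω)) < γ}).toReal
      + p * (ℙ {ω | ∑ i, (w1 i * y i ω - w0 i * (1 - y i ω)) = γ}).toReal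
      ≤ U n α M σ2 Λ := by
  -- basic positivity facts
  have hn : 0 < n := by
    rcases Nat.eq_zero_or_pos n with h | h
    · subst h; simp at hαn; linarith
    · exact h
  have hw1pos : ∀ i, 0 < w1 i := fun i => by
    rw [hw1 i]
    exact Real.log_pos ((one_lt_div (hq i).1).mpr (by linarith [(hq i).2, (hr i).2]))
  have hw0pos : ∀ i, 0 < w0 i := fun i => by
    rw [hw0 i]
    exact Real.log_pos ((one_lt_div (hr i).1).mpr (by linarith [(hq i).2, (hr i).2]))
  have hWpos : ∀ i, 0 < w1 i + w0 i := fun i => by linarith [hw1pos i, hw0pos i]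
  have hMge : ∀ i, max (r i * (w1 i + w0 i)) ((1 - r i) * (w1 i + w0 i)) ≤ M :=
    fun i => hM.2 (Set.mem_range_self i)
  have hMpos : 0 < M := by
    obtain ⟨i⟩ : Nonempty (Fin n) := ⟨⟨0, hn⟩⟩
    calc (0:ℝ) < r i * (w1 i + w0 i) := mul_pos (hr i).1 (hWpos i)
      _ ≤ _ := le_trans (le_max_left _ _) (hMge i)
  have hσ2nn : 0 ≤ σ2 := by
    rw [hσ2]
    apply mul_nonneg (by positivity)
    apply Finset.sum_nonneg
    intro i _
    have h1 := (hr i).1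
    have h2 : (0:ℝ) ≤ 1 - r i := by linarith [(hr i).2]
    positivity
  -- the centered summands
  set c : Fin n → ℝ := fun i => (1 - r i) * w1 i - r i * w0 i with hc
  set X : Fin n → Ω → ℝ :=
    fun i ω => c i - (w1 i * y i ω - w0 i * (1 - y i ω)) with hX
  set t : ℝ := Λ / M with ht
  have ht0 : 0 ≤ t := div_nonneg hΛ0 hMpos.le
  have hXval : ∀ i ω, X i ω = -(r i * (w1 i + w0 i)) ∨ X i ω = (1 - r i) * (w1 i + w0 i) := by
    intro i ω
    rcases h01 i ω with h | h
    · right; simp only [hX, hc, h]; ring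
    · left; simp only [hX, hc, h]; ring
  have hXabs : ∀ i ω, |X i ω| ≤ M := by
    intro i ω
    have h1 : 0 ≤ r i * (w1 i + w0 i) := le_of_lt (mul_pos (hr i).1 (hWpos i))
    have h2 : 0 ≤ (1 - r i) * (w1 i + w0 i) :=
      le_of_lt (mul_pos (by linarith [(hr i).2]) (hWpos i))
    rcases hXval i ω with h | h <;> rw [h]
    · rw [abs_neg, abs_of_nonneg h1]
      exact le_trans (le_max_left _ _) (hMge i)
    · rw [abs_of_nonneg h2]
      exact le_trans (le_max_right _ _) (hMge i)
  have hXmeas : ∀ i, Measurable (X i) := fun i => by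
    apply Measurable.const_sub
    exact ((hmeas i).const_mul _).sub (((hmeas i).const_sub 1).const_mul _)
  have hXindep : iIndepFun X ℙ := by
    have : X = fun i => (fun x : ℝ => c i - (w1 i * x - w0 i * (1 - x))) ∘ y i := rfl
    rw [this]
    exact hindep.comp _ fun i => by fun_prop
  -- Step A : reduce to P(S ≤ γ)
  set S : Ω → ℝ := fun ω => ∑ i, (w1 i * y i ω - w0 i * (1 - y i ω)) with hS
  have hSmeas : Measurable S := by
    apply Finset.measurable_sum
    intro i _
    exact ((hmeas i).const_mul _).sub (((hmeas i).const_sub 1).const_mul _)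
  have hunion : {ω | S ω ≤ γ} = {ω | S ω < γ} ∪ {ω | S ω = γ} := by
    ext ω; simp [le_iff_lt_or_eq]
  have hdisj : Disjoint {ω | S ω < γ} {ω | S ω = γ} := by
    rw [Set.disjoint_left]
    intro ω h1 h2
    simp only [Set.mem_setOf_eq] at h1 h2
    exact absurd h2 (ne_of_lt h1)
  have hA : (ℙ {ω | S ω < γ}).toReal + p * (ℙ {ω | S ω = γ}).toReal
      ≤ (ℙ {ω | S ω ≤ γ}).toReal := by
    have hmeq : ℙ {ω | S ω ≤ γ} = ℙ {ω | S ω < γ} + ℙ {ω | S ω = γ} := by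
      rw [hunion, measure_union hdisj (hSmeas (measurableSet_singleton γ))]
    rw [hmeq, ENNReal.toReal_add (measure_ne_top _ _) (measure_ne_top _ _)]
    have hple : p * (ℙ {ω | S ω = γ}).toReal ≤ (ℙ {ω | S ω = γ}).toReal := by
      nlinarith [hp.1, hp.2, ENNReal.toReal_nonneg (a := ℙ {ω | S ω = γ})]
    linarith
  -- Step B : re-express the event
  have hB : {ω | S ω ≤ γ} = {ω | α ≤ (∑ i, X i) ω} := by
    ext ω
    have hsum : (∑ i, X i) ω = (∑ i, c i) - S ω := by
      rw [Finset.sum_apply]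
      simp only [hX, hS]
      rw [Finset.sum_sub_distrib]
    simp only [Set.mem_setOf_eq, hsum, hα, hc]
    constructor <;> intro h <;> linarith
  -- integrability of exponentials
  have hintX : ∀ i, Integrable (fun ω => Real.exp (t * X i ω)) ℙ := by
    intro i
    refine (integrable_const (Real.exp (t * M))).mono'
      (((hXmeas i).const_mul t).exp.aestronglyMeasurable) ?_
    filter_upwards with ω
    rw [Real.norm_eq_abs, abs_of_pos (Real.exp_pos _), Real.exp_le_exp]
    exact mul_le_mul_of_nonneg_left ((le_abs_self _).trans (hXabs i ω)) ht0
  have hTapp : (∑ i, X i) = fun ω => ∑ i, X i ω := by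
    funext ω; exact Finset.sum_apply _ _ _
  have hTmeas : Measurable (∑ i, X i) := by
    rw [hTapp]; exact Finset.measurable_sum Finset.univ fun i _ => hXmeas i
  have hintS : Integrable (fun ω => Real.exp (t * (∑ i, X i) ω)) ℙ := by
    refine (integrable_const (Real.exp (t * (n * M)))).mono'
      ((hTmeas.const_mul t).exp.aestronglyMeasurable) ?_
    filter_upwards with ω
    rw [Real.norm_eq_abs, abs_of_pos (Real.exp_pos _), Real.exp_le_exp]
    apply mul_le_mul_of_nonneg_left _ ht0
    rw [Finset.sum_apply]
    calc ∑ i, X i ω ≤ ∑ i : Fin n, M :=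
          Finset.sum_le_sum fun i _ => (le_abs_self _).trans (hXabs i ω)
      _ = n * M := by simp [mul_comm]
  -- Step C : Chernoff
  have hC : (ℙ {ω | α ≤ (∑ i, X i) ω}).toReal
      ≤ Real.exp (-t * α) * mgf (∑ i, X i) ℙ t :=
    measure_ge_le_exp_mul_mgf α ht0 hintS
  -- Step D : independence
  have hD : mgf (∑ i, X i) ℙ t = ∏ i, mgf (X i) ℙ t :=
    hXindep.mgf_sum hXmeas Finset.univ
  -- Step E/F : per-sensor bound
  set C : ℝ := Real.exp Λ - 1 - Λ with hC0
  have hCnn : 0 ≤ C := by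
    have := Real.add_one_le_exp Λ; simp only [hC0]; linarith
  have hEF : ∀ i, mgf (X i) ℙ t
      ≤ 1 + r i * (1 - r i) * (w1 i + w0 i) ^ 2 / M ^ 2 * C := by
    intro i
    set a : ℝ := -(r i * (w1 i + w0 i)) with ha
    set b : ℝ := (1 - r i) * (w1 i + w0 i) with hb
    have hexpr : (fun ω => Real.exp (t * X i ω))
        = fun ω => Real.exp (t * a) * y i ω + Real.exp (t * b) * (1 - y i ω) := by
      funext ω
      rcases h01 i ω with h | h
      · have : X i ω = b := by simp only [hX, hc, hb, h]; ring
        rw [this, h]; ring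
      · have : X i ω = a := by simp only [hX, hc, ha, h]; ring
        rw [this, h]; ring
    have hmgf : mgf (X i) ℙ t
        = Real.exp (t * a) * (1 - r i) + Real.exp (t * b) * (r i) := by
      rw [mgf, hexpr, aux_integral_lin (y i) (hmeas i) (h01 i), hber i]
      ring
    have hXa : |a| ≤ M := by
      have h1 : 0 ≤ r i * (w1 i + w0 i) := le_of_lt (mul_pos (hr i).1 (hWpos i))
      rw [ha, abs_neg, abs_of_nonneg h1]
      exact le_trans (le_max_left _ _) (hMge i)
    have hXb : |b| ≤ M := by
      have h2 : 0 ≤ (1 - r i) * (w1 i + w0 i) :=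
        le_of_lt (mul_pos (by linarith [(hr i).2]) (hWpos i))
      rw [hb, abs_of_nonneg h2]
      exact le_trans (le_max_right _ _) (hMge i)
    have hpa := aux_pointwise hMpos hΛ0 hXa
    have hpb := aux_pointwise hMpos hΛ0 hXb
    rw [hmgf]
    have hr1 : 0 < r i := (hr i).1
    have hr2 : r i < 1 := by linarith [(hr i).2]
    have key : Real.exp (t * a) * (1 - r i) + Real.exp (t * b) * r i
        ≤ (1 + t * a + a ^ 2 / M ^ 2 * C) * (1 - r i)
          + (1 + t * b + b ^ 2 / M ^ 2 * C) * r i := by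
      have h1 : Real.exp (t * a) ≤ 1 + t * a + a ^ 2 / M ^ 2 * C := by
        simpa [ht, div_mul_eq_mul_div, mul_comm] using hpa
      have h2 : Real.exp (t * b) ≤ 1 + t * b + b ^ 2 / M ^ 2 * C := by
        simpa [ht, div_mul_eq_mul_div, mul_comm] using hpb
      nlinarith
    refine key.trans (le_of_eq ?_)
    have hzero : a * (1 - r i) + b * r i = 0 := by rw [ha, hb]; ring
    have hsq : a ^ 2 * (1 - r i) + b ^ 2 * r i = r i * (1 - r i) * (w1 i + w0 i) ^ 2 := by
      rw [ha, hb]; ring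
    linear_combination t * hzero + C / M ^ 2 * hsq
  -- Step G : AM-GM
  have hzpos : ∀ i : Fin n, (0:ℝ) ≤ 1 + r i * (1 - r i) * (w1 i + w0 i) ^ 2 / M ^ 2 * C := by
    intro i
    have h0 : 0 ≤ r i * (1 - r i) * (w1 i + w0 i) ^ 2 / M ^ 2 * C :=
      mul_nonneg (div_nonneg (mul_nonneg
        (mul_nonneg (hr i).1.le (by linarith [(hr i).2])) (sq_nonneg _)) (by positivity)) hCnn
    linarith
  have hG : (∏ i, (1 + r i * (1 - r i) * (w1 i + w0 i) ^ 2 / M ^ 2 * C))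
      ≤ (1 + σ2 / M ^ 2 * C) ^ n := by
    set z : Fin n → ℝ := fun i => 1 + r i * (1 - r i) * (w1 i + w0 i) ^ 2 / M ^ 2 * C with hz
    have hAMGM : ∏ i, z i ^ ((n:ℝ)⁻¹) ≤ ∑ i, (n:ℝ)⁻¹ * z i := by
      apply Real.geom_mean_le_arith_mean_weighted
      · intro i _; positivity
      · simp [Finset.card_univ]
        field_simp
      · intro i _; exact hzpos i
    have hsum : ∑ i, (n:ℝ)⁻¹ * z i = 1 + σ2 / M ^ 2 * C := by
      have hne : (n:ℝ) ≠ 0 := Nat.cast_ne_zero.mpr hn.ne'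
      rw [← Finset.mul_sum]
      simp only [hz]
      rw [Finset.sum_add_distrib, Finset.sum_const, Finset.card_univ, Fintype.card_fin,
        nsmul_eq_mul, mul_one]
      have h2 : ∑ i, r i * (1 - r i) * (w1 i + w0 i) ^ 2 / M ^ 2 * C
          = (∑ i, r i * (1 - r i) * (w1 i + w0 i) ^ 2) / M ^ 2 * C := by
        rw [← Finset.sum_mul, ← Finset.sum_div]
      rw [h2, hσ2]
      field_simp
    have hprod : (∏ i, z i) = (∏ i, z i ^ ((n:ℝ)⁻¹)) ^ n := by
      rw [← Finset.prod_pow]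
      apply Finset.prod_congr rfl
      intro i _
      rw [← Real.rpow_natCast (z i ^ ((n:ℝ)⁻¹)) n, ← Real.rpow_mul (hzpos i)]
      rw [inv_mul_cancel₀ (Nat.cast_ne_zero.mpr hn.ne' : (n:ℝ) ≠ 0), Real.rpow_one]
    rw [hprod]
    apply pow_le_pow_left₀ (Finset.prod_nonneg fun i _ => Real.rpow_nonneg (hzpos i) _)
    rw [hsum] at hAMGM
    exact hAMGM
  -- Step H : final assembly
  have hU : Real.exp (-t * α) * (1 + σ2 / M ^ 2 * C) ^ n = U n α M σ2 Λ := by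
    have hpos : (0:ℝ) < 1 + σ2 / M ^ 2 * C := by positivity
    rw [U, Real.exp_add]
    congr 1
    · congr 1
      rw [ht]
      ring
    · rw [Real.exp_nat_mul, Real.exp_log hpos]
  calc (ℙ {ω | S ω < γ}).toReal + p * (ℙ {ω | S ω = γ}).toReal
      ≤ (ℙ {ω | S ω ≤ γ}).toReal := hA
    _ = (ℙ {ω | α ≤ (∑ i, X i) ω}).toReal := by rw [hB]
    _ ≤ Real.exp (-t * α) * mgf (∑ i, X i) ℙ t := hC
    _ = Real.exp (-t * α) * ∏ i, mgf (X i) ℙ t := by rw [hD]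
    _ ≤ Real.exp (-t * α) * ∏ i, (1 + r i * (1 - r i) * (w1 i + w0 i) ^ 2 / M ^ 2 * C) := by
        apply mul_le_mul_of_nonneg_left _ (Real.exp_pos _).le
        exact Finset.prod_le_prod (fun i _ => mgf_nonneg) (fun i _ => hEF i)
    _ ≤ Real.exp (-t * α) * (1 + σ2 / M ^ 2 * C) ^ n := by
        apply mul_le_mul_of_nonneg_left hG (Real.exp_pos _).le
    _ = U n α M σ2 Λ := hU
end
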